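/- Let P ⊂ ℝ³ be a 3-dimensional reflexive polytope with δ-vector (1, δ_1, δ_1, 1). Then −1/2 is a root of L_P and either the remaining two roots are −1/2 ± bi with b ∈ ℝ (P is a CL-polytope), or they are real of the form a and −1−a with a ∈ ℝ (P is real). Moreover: P is a CL-polytope ⟺ δ_1 ≤ 23 ⟺ vol(P) ≤ 8 ⟺ |P ∩ ℤ³| ≤ 27; and P is real ⟺ δ_1 ≥ 23 ⟺ vol(P) ≥ 8 ⟺ |P ∩ ℤ³| ≥ 27. In the real case every root a satisfies −1 < a < 0. -/

import Mathlib

open Pointwise MeasureTheory Polynomial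

noncomputable section

/-- The lattice points of a subset `S ⊆ ℝ^d`: integer vectors whose real cast lies in `S`. -/
def latticePts (d : ℕ) (S : Set (Fin d → ℝ)) : Set (Fin d → ℤ) :=
  {x | (fun i => (x i : ℝ)) ∈ S}

/-- `P ⊆ ℝ^d` is a lattice polytope: the convex hull of finitely many integer points. -/
def IsLatticePolytope (d : ℕ) (P : Set (Fin d → ℝ)) : Prop :=
  ∃ V : Finset (Fin d → ℤ),
    P = convexHull ℝ ((fun v : Fin d → ℤ => fun i => (v i : ℝ)) '' (V : Set (Fin d → ℤ)))

/-- `P` is full-dimensional in `ℝ^d`. -/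
def IsFullDim (d : ℕ) (P : Set (Fin d → ℝ)) : Prop :=
  affineSpan ℝ P = ⊤

/-- `L` is the Ehrhart polynomial of `P`: `L(m) = |mP ∩ ℤ^d|` for every natural number `m`. -/
def IsEhrhart (d : ℕ) (P : Set (Fin d → ℝ)) (L : Polynomial ℚ) : Prop :=
  ∀ m : ℕ, L.eval (m : ℚ) = ((latticePts d ((m : ℝ) • P)).ncard : ℚ)

/-- The complex roots of a rational polynomial, counted with multiplicity. -/
def cRoots (L : Polynomial ℚ) : Multiset ℂ :=
  (L.map (algebraMap ℚ ℂ)).roots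

/-- `L` is a CL-polynomial: every complex root has real part `-1/2`. -/
def IsCL (L : Polynomial ℚ) : Prop :=
  ∀ z ∈ cRoots L, z.re = -(1/2 : ℝ)

/-- `L` has only real roots: every complex root has imaginary part `0`. -/
def IsRealRooted (L : Polynomial ℚ) : Prop :=
  ∀ z ∈ cRoots L, z.im = 0

/-- The dual (polar) body `{u : ⟨u,v⟩ ≥ -1 for all v ∈ P}`. -/
def dualBody (d : ℕ) (P : Set (Fin d → ℝ)) : Set (Fin d → ℝ) :=
  {u | ∀ v ∈ P, -1 ≤ ∑ i, u i * v i}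

/-- `P` is reflexive: the origin is interior and the dual body is a lattice polytope. -/
def IsReflexive (d : ℕ) (P : Set (Fin d → ℝ)) : Prop :=
  (0 : Fin d → ℝ) ∈ interior P ∧ IsLatticePolytope d (dualBody d P)

/-- The Euclidean volume of `P ⊆ ℝ^d`. -/
def vol (d : ℕ) (P : Set (Fin d → ℝ)) : ℝ :=
  (volume P).toReal

/-- `δ` is the δ-vector of the Ehrhart polynomial `L` in dimension `d`:
`L(m) = ∑_{j=0}^d δ_j C(d+m-j, d)` for all natural numbers `m`. -/
def HasDeltaVector (d : ℕ) (L : Polynomial ℚ) (δ : Fin (d+1) → ℤ) : Prop :=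
  ∀ m : ℕ, L.eval (m : ℚ) = ∑ j : Fin (d+1), (δ j : ℚ) * (Nat.choose (d + m - (j : ℕ)) d : ℚ)

/-- The discriminant `B²C² − 4AC³ − 4B³D − 27A²D² + 18ABCD` of the cubic `Az³+Bz²+Cz+D`. -/
def cubicDisc (A B C D : ℚ) : ℚ :=
  B^2*C^2 - 4*A*C^3 - 4*B^3*D - 27*A^2*D^2 + 18*A*B*C*D


section Aux
open Pointwise MeasureTheory Polynomial

lemma choose3 (n : ℕ) : (((n+3).choose 3 : ℕ) : ℚ) = (n+1)*(n+2)*(n+3)/6 := by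
  induction n with
  | zero => norm_num
  | succ n ih =>
    have h : (n+1+3).choose 3 = (n+3).choose 2 + (n+3).choose 3 := Nat.choose_succ_succ (n+3) 2
    rw [show n+1+3 = n+1+3 from rfl, h]; push_cast [ih, Nat.cast_choose_two]; ring

lemma L_explicit (L : Polynomial ℚ) (δ1 : ℤ)
    (hδ : ∀ m : ℕ, L.eval (m : ℚ) = ∑ j : Fin 4, ((![1, δ1, δ1, 1] : Fin 4 → ℤ) j : ℚ) * (Nat.choose (3 + m - (j : ℕ)) 3 : ℚ)) :
    L = C ((2+2*(δ1:ℚ))/6) * X^3 + C ((3+3*(δ1:ℚ))/6) * X^2 + C ((13+(δ1:ℚ))/6) * X + C 1 := by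
  set Q : Polynomial ℚ := C ((2+2*(δ1:ℚ))/6) * X^3 + C ((3+3*(δ1:ℚ))/6) * X^2 + C ((13+(δ1:ℚ))/6) * X + C 1 with hQ
  have key : ∀ n : ℕ, (L - Q).IsRoot ((n : ℚ) + 3) := by
    intro n
    have h1 := hδ (n + 3)
    have e0 : 3 + (n+3) - 0 = (n+3) + 3 := by omega
    have e1 : 3 + (n+3) - 1 = (n+2) + 3 := by omega
    have e2 : 3 + (n+3) - 2 = (n+1) + 3 := by omega
    have e3 : 3 + (n+3) - 3 = n + 3 := by omega
    rw [Fin.sum_univ_four] at h1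
    simp only [Fin.isValue, Matrix.cons_val_zero, Matrix.cons_val_one, Matrix.head_cons,
      Matrix.cons_val_two, Matrix.tail_cons, Matrix.cons_val_three] at h1
    simp only [show ((0:Fin 4):ℕ)=0 from rfl, show ((1:Fin 4):ℕ)=1 from rfl,
      show ((2:Fin 4):ℕ)=2 from rfl, show ((3:Fin 4):ℕ)=3 from rfl] at h1
    rw [e0, e1, e2, e3, choose3, choose3, choose3, choose3] at h1
    simp only [IsRoot, eval_sub, hQ, eval_add, eval_mul, eval_pow, eval_C, eval_X]
    have hc : ((n:ℚ)+3) = ((n+3 : ℕ) : ℚ) := by push_cast; ring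
    rw [hc, h1]; push_cast; ring
  have : L - Q = 0 := by
    apply Polynomial.eq_zero_of_infinite_isRoot
    apply Set.infinite_of_injective_forall_mem (f := fun n : ℕ => (n : ℚ) + 3)
    · intro a b hab; simpa using hab
    · exact key
  exact sub_eq_zero.mp this

def cube (ν : Fin 3 → ℤ) : Set (Fin 3 → ℝ) :=
  Set.univ.pi fun i => Set.Ico (ν i : ℝ) (ν i + 1)

lemma mem_cube_iff {ν : Fin 3 → ℤ} {x : Fin 3 → ℝ} : x ∈ cube ν ↔ ∀ i, ⌊x i⌋ = ν i := by
  simp only [cube, Set.mem_pi, Set.mem_univ, forall_true_left, Set.mem_Ico]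
  refine forall_congr' fun i => ?_
  rw [Int.floor_eq_iff]

lemma cube_measurable (ν : Fin 3 → ℤ) : MeasurableSet (cube ν) :=
  MeasurableSet.univ_pi fun _ => measurableSet_Ico

lemma volume_cube (ν : Fin 3 → ℤ) : volume (cube ν) = 1 := by
  rw [cube, volume_pi_pi]
  simp [Real.volume_Ico]

lemma cube_disjoint : Function.Injective cube ∧ Pairwise (Function.onFun Disjoint cube) := by
  constructor
  · intro a b hab
    have := congrArg (fun s => (fun i => (a i : ℝ)) ∈ s) hab
    simp only [eq_iff_iff] at this
    have h1 : (fun i => (a i:ℝ)) ∈ cube a := mem_cube_iff.mpr fun i => by simp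
    have h2 := this.mp h1
    rw [mem_cube_iff] at h2
    exact funext fun i => by simpa using h2 i
  · intro a b hab
    rw [Function.onFun, Set.disjoint_left]
    intro x hxa hxb
    rw [mem_cube_iff] at hxa hxb
    exact hab (funext fun i => (hxa i).symm.trans (hxb i))

lemma vol_biUnion_cube (S : Set (Fin 3 → ℤ)) (hS : S.Finite) :
    volume (⋃ ν ∈ S, cube ν) = S.ncard := by
  have h1 : (⋃ ν ∈ S, cube ν) = ⋃ ν ∈ hS.toFinset, cube ν := by
    simp [Set.Finite.mem_toFinset]
  rw [h1, measure_biUnion_finset ?_ (fun b _ => cube_measurable b)]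
  · simp only [volume_cube, Finset.sum_const, nsmul_eq_mul, mul_one]
    rw [Set.ncard_eq_toFinset_card S hS]
  · intro a _ b _ hab
    exact cube_disjoint.2 hab

lemma lattice_finite {S : Set (Fin 3 → ℝ)} (hS : Bornology.IsBounded S) :
    (latticePts 3 S).Finite := by
  obtain ⟨R, hR⟩ := hS.subset_closedBall 0
  apply Set.Finite.subset (Set.Finite.pi fun i : Fin 3 => Set.finite_Icc (-⌈R⌉) ⌈R⌉)
  intro x hx
  have h2 := hR hx
  simp only [Metric.mem_closedBall, dist_zero_right] at h2
  intro i _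
  have h3 : |(x i : ℝ)| ≤ R := le_trans (norm_le_pi_norm (fun i => (x i : ℝ)) i) h2
  rw [abs_le] at h3
  constructor
  · have : (-(⌈R⌉:ℝ)) ≤ (x i : ℝ) := le_trans (by simpa using neg_le_neg (Int.le_ceil R)) h3.1
    exact_mod_cast this
  · have : (x i : ℝ) ≤ (⌈R⌉:ℝ) := le_trans h3.2 (Int.le_ceil R)
    exact_mod_cast this

lemma floor_dist_le (x : Fin 3 → ℝ) : ‖(fun i => ((⌊x i⌋ : ℤ) : ℝ)) - x‖ ≤ 1 := by
  rw [pi_norm_le_iff_of_nonneg zero_le_one]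
  intro i
  have h1 := Int.floor_le (x i)
  have h2 := Int.sub_one_lt_floor (x i)
  rw [Pi.sub_apply, Real.norm_eq_abs, abs_le]
  constructor <;> simp <;> linarith

lemma cube_dist_le {ν : Fin 3 → ℤ} {x : Fin 3 → ℝ} (hx : x ∈ cube ν) :
    ‖x - (fun i => ((ν i : ℤ) : ℝ))‖ ≤ 1 := by
  rw [pi_norm_le_iff_of_nonneg zero_le_one]
  intro i
  have := hx i (Set.mem_univ i)
  simp only [Set.mem_Ico] at this
  rw [Pi.sub_apply, Real.norm_eq_abs, abs_le]
  constructor <;> linarith [this.1, this.2]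

lemma main_ineqs (P : Set (Fin 3 → ℝ)) (V : Finset (Fin 3 → ℤ))
    (hPV : P = convexHull ℝ ((fun v : Fin 3 → ℤ => fun i => (v i : ℝ)) '' (V : Set (Fin 3 → ℤ))))
    (h0 : (0 : Fin 3 → ℝ) ∈ interior P) :
    ∃ c : ℕ, ∀ m : ℕ,
      (m:ℝ)^3 * (volume P).toReal ≤ ((latticePts 3 (((m+c : ℕ):ℝ) • P)).ncard : ℝ) ∧
      ((latticePts 3 ((m:ℝ) • P)).ncard : ℝ) ≤ ((m+c : ℕ):ℝ)^3 * (volume P).toReal := by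
  have hconv : Convex ℝ P := hPV ▸ convex_convexHull ℝ _
  have hcomp : IsCompact P := hPV ▸ (Set.toFinite _).isCompact_convexHull ℝ
  have hPm : MeasurableSet P := hcomp.isClosed.measurableSet
  -- radius
  obtain ⟨ε, hε, hball⟩ := Metric.isOpen_iff.mp isOpen_interior 0 h0
  have hclb : Metric.closedBall (0 : Fin 3 → ℝ) (ε/2) ⊆ P :=
    le_trans (le_trans (Metric.closedBall_subset_ball (by linarith)) hball) interior_subset
  set c : ℕ := ⌈2/ε⌉₊ with hc
  have hc1 : (1:ℝ) ≤ c * (ε/2) := by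
    have h2 : (2/ε : ℝ) ≤ c := Nat.le_ceil _
    have : 0 < ε/2 := by linarith
    calc (1:ℝ) = (2/ε) * (ε/2) := by field_simp
    _ ≤ c * (ε/2) := by gcongr
  have hcpos : 0 < (c:ℝ) := by positivity
  -- closed unit ball inside c • P
  have hball1 : Metric.closedBall (0 : Fin 3 → ℝ) 1 ⊆ (c:ℝ) • P := by
    intro x hx
    rw [Metric.mem_closedBall, dist_zero_right] at hx
    refine ⟨(c:ℝ)⁻¹ • x, hclb ?_, smul_inv_smul₀ (ne_of_gt hcpos) x⟩
    rw [Metric.mem_closedBall, dist_zero_right, norm_smul, norm_inv, Real.norm_natCast]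
    rw [inv_mul_le_iff₀ hcpos]
    calc ‖x‖ ≤ 1 := hx
    _ ≤ c * (ε/2) := hc1
  have hsum : ∀ m : ℕ, (m:ℝ) • P + (c:ℝ) • P = (((m+c:ℕ)):ℝ) • P := by
    intro m
    rw [← hconv.add_smul (by positivity) (by positivity)]
    norm_num
  -- cover and packing
  have hA : ∀ m : ℕ, (m:ℝ) • P ⊆ ⋃ ν ∈ latticePts 3 ((((m+c:ℕ)):ℝ) • P), cube ν := by
    intro m x hx
    refine Set.mem_biUnion (show (fun i => ⌊x i⌋) ∈ latticePts 3 ((((m+c:ℕ)):ℝ) • P) from ?_)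
      (mem_cube_iff.mpr fun i => rfl)
    simp only [latticePts, Set.mem_setOf_eq]
    have : (fun i => ((⌊x i⌋:ℤ):ℝ)) = x + ((fun i => ((⌊x i⌋:ℤ):ℝ)) - x) := by ring
    rw [this, ← hsum m]
    exact Set.add_mem_add hx (hball1 (by simpa [Metric.mem_closedBall] using floor_dist_le x))
  have hB : ∀ m : ℕ, (⋃ ν ∈ latticePts 3 ((m:ℝ) • P), cube ν) ⊆ (((m+c:ℕ)):ℝ) • P := by
    intro m x hx
    obtain ⟨ν, hν, hxν⟩ := Set.mem_iUnion₂.mp hx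
    have : x = (fun i => ((ν i:ℤ):ℝ)) + (x - fun i => ((ν i:ℤ):ℝ)) := by ring
    rw [this, ← hsum m]
    exact Set.add_mem_add hν (hball1 (by simpa [Metric.mem_closedBall] using cube_dist_le hxν))
  -- boundedness / finiteness
  have hbdd : ∀ n : ℕ, Bornology.IsBounded ((n:ℝ) • P) :=
    fun n => (hcomp.smul (n:ℝ)).isBounded
  have hfin : ∀ n : ℕ, (latticePts 3 ((n:ℝ) • P)).Finite := fun n => lattice_finite (hbdd n)
  have hvol_smul : ∀ n : ℕ, volume ((n:ℝ) • P) = ENNReal.ofReal ((n:ℝ)^3) * volume P := by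
    intro n
    rw [Measure.addHaar_smul]
    congr 1
    · rw [abs_of_nonneg (by positivity)]
      norm_num [Module.finrank_pi]
  have hvfin : volume P ≠ ⊤ := hcomp.measure_lt_top.ne
  refine ⟨c, fun m => ?_⟩
  constructor
  · -- m^3 vol P ≤ ncard (m+c)
    have h1 : volume ((m:ℝ) • P) ≤ volume (⋃ ν ∈ latticePts 3 ((((m+c:ℕ)):ℝ) • P), cube ν) :=
      measure_mono (hA m)
    rw [hvol_smul m, vol_biUnion_cube _ (hfin (m+c))] at h1
    have := ENNReal.toReal_mono (by simp) h1
    rw [ENNReal.toReal_mul, ENNReal.toReal_ofReal (by positivity)] at this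
    simpa using this
  · -- ncard m ≤ (m+c)^3 vol P
    have h1 : volume (⋃ ν ∈ latticePts 3 ((m:ℝ) • P), cube ν) ≤ volume ((((m+c:ℕ)):ℝ) • P) :=
      measure_mono (hB m)
    rw [hvol_smul (m+c), vol_biUnion_cube _ (hfin m)] at h1
    have := ENNReal.toReal_mono (by finiteness) h1
    rw [ENNReal.toReal_mul, ENNReal.toReal_ofReal (by positivity)] at this
    simpa using this

open Polynomial Filter in
lemma cubic_div_tendsto (a b c d : ℝ) :
    Tendsto (fun n : ℕ => (a*(n:ℝ)^3 + b*(n:ℝ)^2 + c*(n:ℝ) + d) / (n:ℝ)^3) atTop (nhds a) := by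
  have h0 : Tendsto (fun n : ℕ => (1:ℝ)/(n:ℝ)) atTop (nhds 0) := tendsto_one_div_atTop_nhds_zero_nat
  have h : Tendsto (fun n : ℕ => a + b*((1:ℝ)/n) + c*((1/n)*(1/n)) + d*((1/n)*(1/n)*(1/n)))
      atTop (nhds (a + b*0 + c*(0*0) + d*(0*0*0))) := by
    exact (((tendsto_const_nhds.add (h0.const_mul b)).add
      ((h0.mul h0).const_mul c)).add (((h0.mul h0).mul h0).const_mul d))
  have h' : Tendsto (fun n : ℕ => a + b*((1:ℝ)/n) + c*((1/n)*(1/n)) + d*((1/n)*(1/n)*(1/n)))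
      atTop (nhds a) := by simpa using h
  apply h'.congr'
  filter_upwards [eventually_ge_atTop 1] with n hn
  have hn' : (n:ℝ) ≠ 0 := by positivity
  field_simp

open Polynomial Filter in
lemma vol_P_eq (P : Set (Fin 3 → ℝ)) (L : Polynomial ℚ) (δ1 : ℤ) (V : Finset (Fin 3 → ℤ))
    (hPV : P = convexHull ℝ ((fun v : Fin 3 → ℤ => fun i => (v i : ℝ)) '' (V : Set (Fin 3 → ℤ))))
    (h0 : (0 : Fin 3 → ℝ) ∈ interior P)
    (hL : ∀ m : ℕ, L.eval (m : ℚ) = ((latticePts 3 ((m : ℝ) • P)).ncard : ℚ))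
    (hQ : L = C ((2+2*(δ1:ℚ))/6) * X^3 + C ((3+3*(δ1:ℚ))/6) * X^2 + C ((13+(δ1:ℚ))/6) * X + C 1) :
    (volume P).toReal = (1 + (δ1:ℝ))/3 := by
  obtain ⟨c, hc⟩ := main_ineqs P V hPV h0
  have hcard : ∀ n : ℕ, ((latticePts 3 ((n:ℝ) • P)).ncard : ℝ)
      = ((2+2*(δ1:ℝ))*(n:ℝ)^3 + (3+3*(δ1:ℝ))*(n:ℝ)^2 + (13+(δ1:ℝ))*(n:ℝ) + 6)/6 := by
    intro n
    have h1 := (hL n).symm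
    rw [hQ] at h1
    simp only [eval_add, eval_mul, eval_pow, eval_C, eval_X] at h1
    have h2 := congrArg (fun q : ℚ => (q:ℝ)) h1
    push_cast at h2
    rw [h2]; ring
  have hle1 : (volume P).toReal ≤ (1 + (δ1:ℝ))/3 := by
    have htt := cubic_div_tendsto ((1+(δ1:ℝ))/3)
      (((2+2*(δ1:ℝ))*(3*(c:ℝ)) + (3+3*(δ1:ℝ)))/6)
      (((2+2*(δ1:ℝ))*(3*(c:ℝ)^2) + (3+3*(δ1:ℝ))*(2*(c:ℝ)) + (13+(δ1:ℝ)))/6)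
      (((2+2*(δ1:ℝ))*(c:ℝ)^3 + (3+3*(δ1:ℝ))*(c:ℝ)^2 + (13+(δ1:ℝ))*(c:ℝ) + 6)/6)
    apply ge_of_tendsto htt
    filter_upwards [eventually_ge_atTop 1] with m hm
    have hm3 : (0:ℝ) < (m:ℝ)^3 := by positivity
    rw [le_div_iff₀ hm3]
    have h1 := (hc m).1
    rw [hcard (m+c)] at h1
    push_cast at h1
    calc (volume P).toReal * (m:ℝ)^3 = (m:ℝ)^3 * (volume P).toReal := by ring
    _ ≤ ((2+2*(δ1:ℝ))*((m:ℝ)+(c:ℝ))^3 + (3+3*(δ1:ℝ))*((m:ℝ)+(c:ℝ))^2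
        + (13+(δ1:ℝ))*((m:ℝ)+(c:ℝ)) + 6)/6 := h1
    _ = _ := by ring
  have hge1 : (1 + (δ1:ℝ))/3 ≤ (volume P).toReal := by
    have htt1 := cubic_div_tendsto ((1+(δ1:ℝ))/3) ((3+3*(δ1:ℝ))/6) ((13+(δ1:ℝ))/6) 1
    have htt2 := cubic_div_tendsto ((volume P).toReal) (3*(volume P).toReal*(c:ℝ))
      (3*(volume P).toReal*(c:ℝ)^2) ((volume P).toReal*(c:ℝ)^3)
    refine le_of_tendsto_of_tendsto' htt1 htt2 fun m => ?_
    rcases Nat.eq_zero_or_pos m with hm | hm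
    · subst hm; norm_num
    have hm3 : (0:ℝ) < (m:ℝ)^3 := by positivity
    rw [div_le_div_iff_of_pos_right hm3]
    have h1 := (hc m).2
    rw [hcard m] at h1
    push_cast at h1
    calc (1+(δ1:ℝ))/3*(m:ℝ)^3 + (3+3*(δ1:ℝ))/6*(m:ℝ)^2 + (13+(δ1:ℝ))/6*(m:ℝ) + 1
        = ((2+2*(δ1:ℝ))*(m:ℝ)^3 + (3+3*(δ1:ℝ))*(m:ℝ)^2 + (13+(δ1:ℝ))*(m:ℝ) + 6)/6 := by ring
    _ ≤ ((m:ℝ)+(c:ℝ))^3 * (volume P).toReal := h1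
    _ = _ := by ring
  linarith


lemma roots_explicit (δ1 : ℤ) (hδ : 0 ≤ δ1) (w : ℂ)
    (hw : w^2 = 1/4 - 6/(1+(δ1:ℂ))) :
    (((C ((2+2*(δ1:ℚ))/6) * X^3 + C ((3+3*(δ1:ℚ))/6) * X^2 + C ((13+(δ1:ℚ))/6) * X + C 1
      : Polynomial ℚ)).map (algebraMap ℚ ℂ)).roots
    = {(-(1/2):ℂ), -(1/2)+w, -(1/2)-w} := by
  have hK : (1+(δ1:ℂ)) ≠ 0 := by
    have : ((1+δ1 : ℤ):ℂ) ≠ 0 := Int.cast_ne_zero.mpr (by omega)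
    push_cast at this
    exact this
  have hfac : ((C ((2+2*(δ1:ℚ))/6) * X^3 + C ((3+3*(δ1:ℚ))/6) * X^2 + C ((13+(δ1:ℚ))/6) * X + C 1
      : Polynomial ℚ)).map (algebraMap ℚ ℂ)
      = C ((1+(δ1:ℂ))/3) * ((X - C (-(1/2):ℂ)) * ((X - C (-(1/2)+w)) * (X - C (-(1/2)-w)))) := by
    apply Polynomial.funext
    intro x
    simp only [eval_map, eval₂_add, eval₂_mul, eval₂_pow, eval₂_C, eval₂_X, eval_mul, eval_sub,
      eval_add, eval_C, eval_X, eval_pow]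
    have hmap : ∀ q : ℚ, (algebraMap ℚ ℂ) q = (q:ℂ) := fun q => by
      simp
    rw [hmap, hmap, hmap, hmap]
    push_cast
    have hw' : w^2 * (1+(δ1:ℂ)) = (1+(δ1:ℂ))/4 - 6 := by rw [hw]; field_simp
    field_simp
    ring_nf
    linear_combination (24*(2*x+1) : ℂ) * hw'
  rw [hfac, roots_C_mul _ (div_ne_zero hK (by norm_num)), roots_mul (mul_ne_zero (X_sub_C_ne_zero _)
    (mul_ne_zero (X_sub_C_ne_zero _) (X_sub_C_ne_zero _))), roots_X_sub_C,
    roots_mul (mul_ne_zero (X_sub_C_ne_zero _) (X_sub_C_ne_zero _)), roots_X_sub_C, roots_X_sub_C]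
  rfl

end Aux

theorem statement5 (P : Set (Fin 3 → ℝ)) (L : Polynomial ℚ) (δ1 : ℤ)
    (hP : IsLatticePolytope 3 P) (hdim : IsFullDim 3 P) (href : IsReflexive 3 P)
    (hL : IsEhrhart 3 P L) (hδ : HasDeltaVector 3 L ![1, δ1, δ1, 1]) :
    ((-(1/2) : ℂ) ∈ cRoots L) ∧
    ((∃ b : ℝ, cRoots L =
        {(-(1/2) : ℂ), (-(1/2) : ℂ) + b * Complex.I, (-(1/2) : ℂ) - b * Complex.I}) ∨
      (∃ a : ℝ, cRoots L = {(-(1/2) : ℂ), (a : ℂ), ((-1 - a : ℝ) : ℂ)})) ∧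
    (IsCL L ↔ δ1 ≤ 23) ∧ (IsCL L ↔ vol 3 P ≤ 8) ∧ (IsCL L ↔ (latticePts 3 P).ncard ≤ 27) ∧
    (IsRealRooted L ↔ 23 ≤ δ1) ∧ (IsRealRooted L ↔ 8 ≤ vol 3 P) ∧
    (IsRealRooted L ↔ 27 ≤ (latticePts 3 P).ncard) ∧
    (IsRealRooted L → ∀ z ∈ cRoots L, -1 < z.re ∧ z.re < 0) := by
  obtain ⟨V, hPV⟩ := hP
  have h0 := href.1
  have hQ : L = C ((2+2*(δ1:ℚ))/6) * X^3 + C ((3+3*(δ1:ℚ))/6) * X^2 + C ((13+(δ1:ℚ))/6) * X + C 1 :=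
    L_explicit L δ1 hδ
  have hvol : (volume P).toReal = (1 + (δ1:ℝ))/3 := vol_P_eq P L δ1 V hPV h0 hL hQ
  have hvpos : 0 < (volume P).toReal := by
    refine ENNReal.toReal_pos ?_ ?_
    · have h1 : 0 < volume (interior P) := IsOpen.measure_pos volume isOpen_interior ⟨0, h0⟩
      exact (lt_of_lt_of_le h1 (measure_mono interior_subset)).ne'
    · exact ((hPV ▸ (Set.toFinite _).isCompact_convexHull ℝ).measure_lt_top).ne
  have hδ0 : 0 ≤ δ1 := by
    by_contra h
    have h2 : (δ1:ℝ) ≤ -1 := by exact_mod_cast (by omega : δ1 ≤ -1)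
    rw [hvol] at hvpos; linarith
  have hkR : (0:ℝ) < 1 + (δ1:ℝ) := by
    have : (0:ℝ) ≤ (δ1:ℝ) := by exact_mod_cast hδ0
    linarith
  have hcard : ((latticePts 3 P).ncard : ℚ) = 4 + (δ1:ℚ) := by
    have h1 := hL 1
    rw [hQ] at h1
    simp only [eval_add, eval_mul, eval_pow, eval_C, eval_X] at h1
    rw [show ((1:ℕ):ℝ) = (1:ℝ) by norm_num, one_smul] at h1
    rw [← h1]; push_cast; ring
  have hA : δ1 ≤ 23 → cRoots L = {(-(1/2):ℂ),
      (-(1/2):ℂ) + (Real.sqrt (6/(1+(δ1:ℝ)) - 1/4) : ℝ) * Complex.I,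
      (-(1/2):ℂ) - (Real.sqrt (6/(1+(δ1:ℝ)) - 1/4) : ℝ) * Complex.I} := by
    intro h23
    have h23' : (δ1:ℝ) ≤ 23 := by exact_mod_cast h23
    have hb2 : 0 ≤ 6/(1+(δ1:ℝ)) - 1/4 := by
      have h14 : (1:ℝ)/4 ≤ 6/(1+(δ1:ℝ)) := by rw [le_div_iff₀ hkR]; linarith
      linarith
    have hw : (((Real.sqrt (6/(1+(δ1:ℝ)) - 1/4) : ℝ) : ℂ) * Complex.I)^2
        = 1/4 - 6/(1+(δ1:ℂ)) := by
      rw [mul_pow, Complex.I_sq, ← Complex.ofReal_pow, Real.sq_sqrt hb2]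
      push_cast
      ring
    rw [cRoots, hQ]
    exact roots_explicit δ1 hδ0 _ hw
  have hB : 23 ≤ δ1 → cRoots L = {(-(1/2):ℂ),
      (-(1/2):ℂ) + ((Real.sqrt (1/4 - 6/(1+(δ1:ℝ))) : ℝ) : ℂ),
      (-(1/2):ℂ) - ((Real.sqrt (1/4 - 6/(1+(δ1:ℝ))) : ℝ) : ℂ)} := by
    intro h23
    have h23' : (23:ℝ) ≤ (δ1:ℝ) := by exact_mod_cast h23
    have hb2 : 0 ≤ 1/4 - 6/(1+(δ1:ℝ)) := by
      have h14 : 6/(1+(δ1:ℝ)) ≤ (1:ℝ)/4 := by rw [div_le_iff₀ hkR]; linarith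
      linarith
    have hw : (((Real.sqrt (1/4 - 6/(1+(δ1:ℝ))) : ℝ) : ℂ))^2 = 1/4 - 6/(1+(δ1:ℂ)) := by
      rw [← Complex.ofReal_pow, Real.sq_sqrt hb2]
      push_cast
      ring
    rw [cRoots, hQ]
    exact roots_explicit δ1 hδ0 _ hw
  -- iffs with δ1
  have hCL : IsCL L ↔ δ1 ≤ 23 := by
    constructor
    · intro hcl
      by_contra h
      have h24 : 24 ≤ δ1 := by omega
      have h24' : (24:ℝ) ≤ (δ1:ℝ) := by exact_mod_cast h24
      set t := Real.sqrt (1/4 - 6/(1+(δ1:ℝ))) with ht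
      have htpos : 0 < t := by
        apply Real.sqrt_pos.mpr
        have : 6/(1+(δ1:ℝ)) < (1:ℝ)/4 := by rw [div_lt_iff₀ hkR]; linarith
        linarith
      have hz : ((-(1/2):ℂ) + (t:ℂ)) ∈ cRoots L := by
        rw [hB (by omega)]
        simp
      have := hcl _ hz
      simp [Complex.add_re, Complex.ofReal_re] at this
      norm_num at this
      linarith
    · intro h23
      intro z hz
      rw [hA h23] at hz
      simp only [Multiset.insert_eq_cons, Multiset.mem_cons, Multiset.mem_singleton] at hz
      rcases hz with h | h | h <;> subst h <;>
        simp [Complex.add_re, Complex.sub_re, Complex.neg_re, Complex.mul_re,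
          Complex.I_re, Complex.I_im, Complex.ofReal_re, Complex.ofReal_im] <;> norm_num
  have hRR : IsRealRooted L ↔ 23 ≤ δ1 := by
    constructor
    · intro hrr
      by_contra h
      have h22 : δ1 ≤ 22 := by omega
      have h22' : (δ1:ℝ) ≤ 22 := by exact_mod_cast h22
      set b := Real.sqrt (6/(1+(δ1:ℝ)) - 1/4) with hb
      have hbpos : 0 < b := by
        apply Real.sqrt_pos.mpr
        have : (1:ℝ)/4 < 6/(1+(δ1:ℝ)) := by rw [lt_div_iff₀ hkR]; linarith
        linarith
      have hz : ((-(1/2):ℂ) + (b:ℂ) * Complex.I) ∈ cRoots L := by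
        rw [hA (by omega)]
        simp
      have := hrr _ hz
      simp [Complex.add_re, Complex.add_im, Complex.neg_im, Complex.mul_im,
        Complex.I_re, Complex.I_im, Complex.ofReal_re, Complex.ofReal_im] at this
      linarith
    · intro h23 z hz
      rw [hB h23] at hz
      simp only [Multiset.insert_eq_cons, Multiset.mem_cons, Multiset.mem_singleton] at hz
      rcases hz with h | h | h <;> subst h <;>
        simp [Complex.add_im, Complex.sub_im, Complex.neg_im, Complex.ofReal_im] <;> norm_num
  have hvol_iff : vol 3 P ≤ 8 ↔ δ1 ≤ 23 := by
    rw [vol, hvol]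
    constructor
    · intro h
      have : (δ1:ℝ) ≤ 23 := by linarith
      exact_mod_cast this
    · intro h
      have : (δ1:ℝ) ≤ 23 := by exact_mod_cast h
      linarith
  have hvol_iff' : 8 ≤ vol 3 P ↔ 23 ≤ δ1 := by
    rw [vol, hvol]
    constructor
    · intro h
      have : (23:ℝ) ≤ (δ1:ℝ) := by linarith
      exact_mod_cast this
    · intro h
      have : (23:ℝ) ≤ (δ1:ℝ) := by exact_mod_cast h
      linarith
  have hcard_iff : (latticePts 3 P).ncard ≤ 27 ↔ δ1 ≤ 23 := by
    constructor
    · intro h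
      have h2 : ((latticePts 3 P).ncard : ℚ) ≤ 27 := by exact_mod_cast h
      rw [hcard] at h2
      have : (δ1:ℚ) ≤ 23 := by linarith
      exact_mod_cast this
    · intro h
      have h2 : (δ1:ℚ) ≤ 23 := by exact_mod_cast h
      have h3 : ((latticePts 3 P).ncard : ℚ) ≤ 27 := by rw [hcard]; linarith
      exact_mod_cast h3
  have hcard_iff' : 27 ≤ (latticePts 3 P).ncard ↔ 23 ≤ δ1 := by
    constructor
    · intro h
      have h2 : (27:ℚ) ≤ ((latticePts 3 P).ncard : ℚ) := by exact_mod_cast h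
      rw [hcard] at h2
      have : (23:ℚ) ≤ (δ1:ℚ) := by linarith
      exact_mod_cast this
    · intro h
      have h2 : (23:ℚ) ≤ (δ1:ℚ) := by exact_mod_cast h
      have h3 : (27:ℚ) ≤ ((latticePts 3 P).ncard : ℚ) := by rw [hcard]; linarith
      exact_mod_cast h3
  refine ⟨?_, ?_, hCL, hCL.trans hvol_iff.symm, hCL.trans hcard_iff.symm,
    hRR, hRR.trans hvol_iff'.symm, hRR.trans hcard_iff'.symm, ?_⟩
  · rcases le_or_gt δ1 23 with h | h
    · rw [hA h]; simp
    · rw [hB (by omega)]; simp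
  · rcases le_or_gt δ1 23 with h | h
    · exact Or.inl ⟨_, hA h⟩
    · refine Or.inr ⟨-1/2 + Real.sqrt (1/4 - 6/(1+(δ1:ℝ))), ?_⟩
      have e1 : (((-1/2 + Real.sqrt (1/4 - 6/(1+(δ1:ℝ))) : ℝ)):ℂ)
          = (-(1/2):ℂ) + ((Real.sqrt (1/4 - 6/(1+(δ1:ℝ))) : ℝ) : ℂ) := by push_cast; ring
      have e2 : (((-1 - (-1/2 + Real.sqrt (1/4 - 6/(1+(δ1:ℝ)))) : ℝ)):ℂ)
          = (-(1/2):ℂ) - ((Real.sqrt (1/4 - 6/(1+(δ1:ℝ))) : ℝ) : ℂ) := by push_cast; ring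
      rw [e1, e2]
      exact hB (by omega)
  · intro hrr z hz
    have h23 : 23 ≤ δ1 := hRR.mp hrr
    rw [hB h23] at hz
    set t := Real.sqrt (1/4 - 6/(1+(δ1:ℝ))) with ht
    have ht0 : 0 ≤ t := Real.sqrt_nonneg _
    have ht2 : t^2 = 1/4 - 6/(1+(δ1:ℝ)) := Real.sq_sqrt (by
      have h23' : (23:ℝ) ≤ (δ1:ℝ) := by exact_mod_cast h23
      have : 6/(1+(δ1:ℝ)) ≤ (1:ℝ)/4 := by rw [div_le_iff₀ hkR]; linarith
      linarith)
    have htlt : t < 1/2 := by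
      have h6pos : 0 < 6/(1+(δ1:ℝ)) := by positivity
      nlinarith
    simp only [Multiset.insert_eq_cons, Multiset.mem_cons, Multiset.mem_singleton] at hz
    rcases hz with h | h | h <;> subst h <;>
      constructor <;>
      simp [Complex.add_re, Complex.sub_re, Complex.neg_re, Complex.ofReal_re] <;>
      norm_num <;> linarith
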